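/- Let X₀ = 0 and let X₁, ..., X_T, X_{T+1} = 0 be such that X₁, ..., X_T are independent integrable random variables with means μᵢ = E[Xᵢ] (with μ_{T+1} = 0). Define pᵢ = P(Xᵢ ≤ μ_{i+1}) for i ∈ {0, ..., T}. Then the Buy-Low-Sell-High algorithm (sell when holding and Xᵢ > μ_{i+1}; buy when not holding and Xᵢ ≤ μ_{i+1}; starting by buying at price X₀ = 0) holds the stock at the start of step i with probability exactly p_{i-1}, and its expected profit equals Σ_{i=1}^{T} E[max(μᵢ - X_{i-1}, 0)]. -/

import Mathlib

open MeasureTheory ProbabilityTheory Finset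

/-!
Since `X₀ = 0 ≤ μ₁`, the algorithm holds at step `i` exactly when `X_{i-1} ≤ μᵢ`, an event
independent of `Xᵢ`. Hence the expected gain of step `i` is
`P(X_{i-1} ≤ μᵢ) μᵢ - E[Xᵢ; Xᵢ ≤ μ_{i+1}]`, whereas
`E[max(μᵢ - X_{i-1}, 0)] = μᵢ P(X_{i-1} ≤ μᵢ) - E[X_{i-1}; X_{i-1} ≤ μᵢ]`.
The difference telescopes to `E[X₀; X₀ ≤ μ₁] - E[X_T; X_T ≤ μ_{T+1}]`, and both terms vanish
because `X₀ = 0` and `X_T ≥ 0 = μ_{T+1}`.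
-/

/-- Holding state of the Buy-Low-Sell-High algorithm: `holdBLSH μ x i` is `true`
iff the algorithm holds the stock after observing the price `x i` (the algorithm
starts by buying at price `x 0 = 0`; it sells when holding and `x i > μ (i+1)`,
and buys when not holding and `x i ≤ μ (i+1)`, so after step `i ≥ 1` it holds
iff `x i ≤ μ (i+1)`). -/
noncomputable def holdBLSH (μ : ℕ → ℝ) (x : ℕ → ℝ) : ℕ → Bool
  | 0 => true
  | i + 1 => decide (x (i + 1) ≤ μ (i + 2))

lemma holdBLSH_eq_true_iff {μ x : ℕ → ℝ} (h0 : x 0 ≤ μ 1) (i : ℕ) :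
    holdBLSH μ x i = true ↔ x i ≤ μ (i + 1) := by
  cases i <;> simp [holdBLSH, h0]

lemma Finset.sum_Icc_one_sub_pred {M : Type*} [AddCommGroup M] (f : ℕ → M) (n : ℕ) :
    ∑ i ∈ Icc 1 n, (f (i - 1) - f i) = f 0 - f n := by
  induction n with
  | zero => simp
  | succ n ih =>
    rw [sum_Icc_succ_top (by omega), ih, Nat.add_sub_cancel]
    abel

section

variable {Ω α : Type*} [MeasurableSpace Ω] [MeasurableSpace α] {P : Measure Ω}

lemma ProbabilityTheory.IndepFun.integral_indicator_preimage {U : Ω → α} {g : Ω → ℝ}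
    {s : Set α} (h : IndepFun U g P) (hU : Measurable U) (hs : MeasurableSet s)
    (hg : AEStronglyMeasurable g P) :
    ∫ ω, (U ⁻¹' s).indicator g ω ∂P = P.real (U ⁻¹' s) * ∫ ω, g ω ∂P := by
  have hs1 : Measurable (s.indicator (1 : α → ℝ)) := measurable_one.indicator hs
  calc ∫ ω, (U ⁻¹' s).indicator g ω ∂P = ∫ ω, (s.indicator 1 ∘ U) ω * g ω ∂P := by
        congr 1 with ω
        by_cases hω : U ω ∈ s <;> simp [hω]
    _ = (∫ ω, (U ⁻¹' s).indicator 1 ω ∂P) * ∫ ω, g ω ∂P :=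
        (h.comp hs1 measurable_id).integral_fun_mul_eq_mul_integral
          (hs1.comp hU).aestronglyMeasurable hg
    _ = P.real (U ⁻¹' s) * ∫ ω, g ω ∂P := by rw [integral_indicator_one (hU hs)]

lemma integral_max_sub_zero [IsFiniteMeasure P] {U : Ω → ℝ} (hU : Measurable U)
    (hUi : Integrable U P) (a : ℝ) :
    ∫ ω, max (a - U ω) 0 ∂P = a * P.real {ω | U ω ≤ a} - ∫ ω in {ω | U ω ≤ a}, U ω ∂P := by
  have hS : MeasurableSet {ω | U ω ≤ a} := measurableSet_le hU measurable_const
  have hmax : (fun ω => max (a - U ω) 0) = {ω | U ω ≤ a}.indicator (fun ω => a - U ω) := by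
    ext ω
    by_cases hω : U ω ≤ a <;> simp [hω, le_of_lt, not_le.mp]
  rw [hmax, integral_indicator hS, integral_sub (integrable_const a) hUi.integrableOn,
    setIntegral_const, smul_eq_mul, mul_comm]

lemma integral_indicator_sell_sub_indicator_buy [IsProbabilityMeasure P] {U V : Ω → ℝ}
    (h : IndepFun U V P) (hU : Measurable U) (hV : Measurable V) (hVi : Integrable V P)
    (a b : ℝ) :
    ∫ ω, ({ω | U ω ≤ a ∧ b < V ω}.indicator V ω - {ω | ¬ U ω ≤ a ∧ V ω ≤ b}.indicator V ω) ∂P =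
      P.real {ω | U ω ≤ a} * ∫ ω, V ω ∂P - ∫ ω in {ω | V ω ≤ b}, V ω ∂P := by
  have hUa : MeasurableSet (U ⁻¹' Set.Iic a) := hU measurableSet_Iic
  have hVb : MeasurableSet (V ⁻¹' Set.Iic b) := hV measurableSet_Iic
  have hVb' : MeasurableSet (V ⁻¹' Set.Ioi b) := hV measurableSet_Ioi
  have hind (t : Set ℝ) (ht : MeasurableSet t) : IndepFun U ((V ⁻¹' t).indicator V) P :=
    h.comp measurable_id (measurable_id.indicator ht)
  have hsell : ∫ ω, {ω | U ω ≤ a ∧ b < V ω}.indicator V ω ∂P =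
      P.real (U ⁻¹' Set.Iic a) * ∫ ω in V ⁻¹' Set.Ioi b, V ω ∂P := by
    rw [← integral_indicator hVb', ← (hind _ measurableSet_Ioi).integral_indicator_preimage hU
      measurableSet_Iic (hVi.indicator hVb').aestronglyMeasurable, Set.indicator_indicator]
    rfl
  have hbuy : ∫ ω, {ω | ¬ U ω ≤ a ∧ V ω ≤ b}.indicator V ω ∂P =
      P.real (U ⁻¹' (Set.Iic a)ᶜ) * ∫ ω in V ⁻¹' Set.Iic b, V ω ∂P := by
    rw [← integral_indicator hVb, ← (hind _ measurableSet_Iic).integral_indicator_preimage hU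
      measurableSet_Iic.compl (hVi.indicator hVb).aestronglyMeasurable, Set.indicator_indicator]
    rfl
  have hsell_meas : MeasurableSet {ω | U ω ≤ a ∧ b < V ω} := hUa.inter hVb'
  have hbuy_meas : MeasurableSet {ω | ¬ U ω ≤ a ∧ V ω ≤ b} := hUa.compl.inter hVb
  rw [integral_sub (hVi.indicator hsell_meas) (hVi.indicator hbuy_meas), hsell, hbuy,
    Set.preimage_compl, measureReal_compl hUa, probReal_univ,
    ← integral_add_compl hVb hVi, ← Set.preimage_compl, Set.compl_Iic]
  change _ = P.real (U ⁻¹' Set.Iic a) * _ - ∫ ω in V ⁻¹' Set.Iic b, V ω ∂P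
  ring

end

theorem buy_low_sell_high_profit_general {Ω : Type*} [MeasureSpace Ω]
    [IsProbabilityMeasure (ℙ : Measure Ω)]
    (T : ℕ) (X : ℕ → Ω → ℝ) (μ : ℕ → ℝ)
    (hX0 : ∀ ω, X 0 ω = 0)
    (hmeas : ∀ i, Measurable (X i))
    (hint : ∀ i, Integrable (X i))
    (hnonneg : ∀ i ω, 0 ≤ X i ω)
    (hindep : iIndepFun X ℙ)
    (hμ : ∀ i ∈ Icc 1 T, μ i = ∫ ω, X i ω)
    (hμT1 : μ (T + 1) = 0) :
    (∀ i ∈ Icc 1 T,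
        ℙ {ω | holdBLSH μ (fun j => X j ω) (i - 1) = true} =
          ℙ {ω | X (i - 1) ω ≤ μ i}) ∧
      (∫ ω, ∑ i ∈ Icc 1 T,
          (({ω' : Ω | holdBLSH μ (fun j => X j ω') (i - 1) = true ∧ μ (i + 1) < X i ω'}.indicator
              (fun ω' => X i ω') ω) -
            {ω' : Ω | holdBLSH μ (fun j => X j ω') (i - 1) = false ∧ X i ω' ≤ μ (i + 1)}.indicator
              (fun ω' => X i ω') ω)) =
        ∑ i ∈ Icc 1 T, ∫ ω, max (μ i - X (i - 1) ω) 0 := by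
  have hμ1 : 0 ≤ μ 1 := by
    rcases Nat.eq_zero_or_pos T with rfl | hT
    · exact hμT1.ge
    · rw [hμ 1 (mem_Icc.2 ⟨le_rfl, hT⟩)]
      exact integral_nonneg (hnonneg 1)
  have hhold (ω : Ω) (i : ℕ) : holdBLSH μ (fun j => X j ω) i = true ↔ X i ω ≤ μ (i + 1) :=
    holdBLSH_eq_true_iff ((hX0 ω).trans_le hμ1) i
  have hhold' (ω : Ω) (i : ℕ) : holdBLSH μ (fun j => X j ω) i = false ↔ ¬ X i ω ≤ μ (i + 1) := by
    rw [← hhold, Bool.not_eq_true]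
  simp only [hhold, hhold']
  refine ⟨fun i hi => by rw [Nat.sub_add_cancel (mem_Icc.1 hi).1], ?_⟩
  set w : ℕ → ℝ := fun i => ∫ ω in {ω | X i ω ≤ μ (i + 1)}, X i ω
  have hw0 : w 0 = 0 := by simp [w, hX0]
  have hwT : w T = 0 := setIntegral_eq_zero_of_forall_eq_zero fun ω hω =>
    le_antisymm (hμT1 ▸ hω) (hnonneg T ω)
  rw [integral_finsetSum _ fun i _ => ?integrable]
  case integrable =>
    exact ((hint i).indicator (by measurability)).sub ((hint i).indicator (by measurability))
  trans ∑ i ∈ Icc 1 T, ((∫ ω, max (μ i - X (i - 1) ω) 0) + (w (i - 1) - w i))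
  · refine sum_congr rfl fun i hi => ?_
    obtain ⟨k, rfl⟩ : ∃ k, i = k + 1 := ⟨i - 1, by grind⟩
    rw [Nat.add_sub_cancel, integral_indicator_sell_sub_indicator_buy
      (hindep.indepFun k.succ_ne_self.symm) (hmeas k) (hmeas (k + 1)) (hint (k + 1)),
      integral_max_sub_zero (hmeas k) (hint k), ← hμ (k + 1) hi]
    ring
  · rw [sum_add_distrib, sum_Icc_one_sub_pred, hw0, hwT, sub_zero, add_zero]

theorem buy_low_sell_high_profit {Ω : Type*} [MeasureSpace Ω]
    [IsProbabilityMeasure (ℙ : Measure Ω)]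
    (T : ℕ) (X : ℕ → Ω → ℝ) (μ : ℕ → ℝ)
    (hX0 : ∀ ω, X 0 ω = 0) (hXT1 : ∀ ω, X (T + 1) ω = 0)
    (hmeas : ∀ i, Measurable (X i))
    (hint : ∀ i, Integrable (X i))
    (hnonneg : ∀ i ω, 0 ≤ X i ω)
    (hindep : iIndepFun X ℙ)
    (hμ : ∀ i ∈ Icc 1 T, μ i = ∫ ω, X i ω)
    (hμT1 : μ (T + 1) = 0) :
    (∀ i ∈ Icc 1 T,
        ℙ {ω | holdBLSH μ (fun j => X j ω) (i - 1) = true} =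
          ℙ {ω | X (i - 1) ω ≤ μ i}) ∧
      (∫ ω, ∑ i ∈ Icc 1 T,
          (({ω' : Ω | holdBLSH μ (fun j => X j ω') (i - 1) = true ∧ μ (i + 1) < X i ω'}.indicator
              (fun ω' => X i ω') ω) -
            {ω' : Ω | holdBLSH μ (fun j => X j ω') (i - 1) = false ∧ X i ω' ≤ μ (i + 1)}.indicator
              (fun ω' => X i ω') ω)) =
        ∑ i ∈ Icc 1 T, ∫ ω, max (μ i - X (i - 1) ω) 0 :=
  buy_low_sell_high_profit_general T X μ hX0 hmeas hint hnonneg hindep hμ hμT1
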